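/- Let B: ℂ → SL(2,ℂ) be smooth with B(z) = [[ρ(z), c(z)],[0, ρ(z)⁻¹]], ρ real positive and c complex. If the sl(2,ℂ)-valued function A = ζ₀ − (∂_z B)B⁻¹ with ζ₀ = [[u₀, v₀],[w₀, −u₀]] and A'' = −(∂_z̄ B)B⁻¹ satisfy A = −(conj A'')ᵗ, then u₀ = 2ρ⁻¹ρ_z, v₀ = ρc_z − cρ_z, w₀ = ρc̄_z − c̄ρ_z, and consequently A = [[u₀/2, 0],[w₀, −u₀/2]]. -/
import Mathlib


open Matrix Complex

/-- the key computation of Symes' method. With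
`B = [[ρ, c],[0, ρ⁻¹]]` (`ρ` real positive, so `ρ_z̄ = conj ρ_z` and
`c̄_z = conj(c_z̄)`), `(∂_z B)B⁻¹ = [[ρ⁻¹ρ_z, ρc_z − cρ_z],[0, −ρ⁻¹ρ_z]]` and
similarly for `z̄`, if `A = ζ₀ − (∂_z B)B⁻¹` and `A'' = −(∂_z̄ B)B⁻¹` satisfy
`A = −(conj A'')ᵗ`, then `u₀ = 2ρ⁻¹ρ_z`, `v₀ = ρc_z − cρ_z`,
`w₀ = ρc̄_z − c̄ρ_z`, and consequently `A = [[u₀/2, 0],[w₀, −u₀/2]]`.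
Here values at a fixed point are considered: `ρ > 0`, `ρz = ρ_z`, `c`,
`cz = c_z`, `czbar = c_z̄`. -/
theorem symes_key_computation (ρ : ℝ) (hρ : 0 < ρ) (ρz c cz czbar u₀ v₀ w₀ : ℂ)
    (A A'' : Matrix (Fin 2) (Fin 2) ℂ)
    (hA : A = !![u₀, v₀; w₀, -u₀] -
      !![(ρ : ℂ)⁻¹ * ρz, (ρ : ℂ) * cz - c * ρz; 0, -((ρ : ℂ)⁻¹ * ρz)])
    (hA'' : A'' = -!![(ρ : ℂ)⁻¹ * starRingEnd ℂ ρz,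
        (ρ : ℂ) * czbar - c * starRingEnd ℂ ρz;
        0, -((ρ : ℂ)⁻¹ * starRingEnd ℂ ρz)])
    (hreal : A = -(A''ᴴ)) :
    u₀ = 2 * (ρ : ℂ)⁻¹ * ρz ∧
    v₀ = (ρ : ℂ) * cz - c * ρz ∧
    w₀ = (ρ : ℂ) * starRingEnd ℂ czbar - starRingEnd ℂ c * ρz ∧
    A = !![u₀ / 2, 0; w₀, -(u₀ / 2)] := by
  subst hA hA''
  have h00 := congrFun (congrFun hreal 0) 0
  have h01 := congrFun (congrFun hreal 0) 1
  have h10 := congrFun (congrFun hreal 1) 0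
  simp [conjTranspose_apply, Complex.conj_ofReal, mul_comm] at h00 h01 h10
  have hu : u₀ = 2 * (ρ : ℂ)⁻¹ * ρz := by linear_combination h00
  refine ⟨hu, by linear_combination h01, by linear_combination h10, ?_⟩
  ext i j
  fin_cases i <;> fin_cases j <;> simp <;>
    first
      | linear_combination h00/2
      | linear_combination -h00/2
      | linear_combination h01
      | linear_combination -h01
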